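/- Let n ≥ 1, β > 1, ℓ ∈ ℝ, q ∈ [0,1], and ε₁, ε₂ > 0. Let x, x' : Fin n → ℝ be datasets differing in at most one coordinate. Define f_i(y) = |{j : y_j − ℓ + 1 < β^i}| and let T = q·n. For k ≥ 1 let P_x(k) be the probability, under independent noise v₀ drawn from the exponential distribution of scale 1/ε₁ and v₁, …, v_k each drawn from the exponential distribution of scale 1/ε₂, of the event {f_i(x) + v_i < T + v₀ for all 1 ≤ i ≤ k−1, and f_k(x) + v_k ≥ T + v₀}, and P_{x'}(k) likewise with x' in place of x. Then for every k ≥ 1: P_x(k) ≤ exp(ε₁ + ε₂)·P_{x'}(k). (The unbounded quantile mechanism is (ε₁+ε₂)-DP under the swap definition of neighbors.) -/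

import Mathlib

open MeasureTheory Real

/-- The exponential distribution with scale `b`: density `z ↦ (1/b)·exp(−z/b)` for `z ≥ 0`
(and `0` for `z < 0`) with respect to Lebesgue measure. -/
noncomputable def expDist (b : ℝ) : Measure ℝ :=
  volume.withDensity fun z =>
    ENNReal.ofReal (if 0 ≤ z then (1 / b) * Real.exp (-(z / b)) else 0)

/-- The event that `AboveThreshold` with threshold `T` and query values `a 1, a 2, …` halts
exactly at query `k`: coordinates `v 0, v 1, …, v k` are the noise on the threshold and on
queries `1, …, k`. -/
def haltEvent (T : ℝ) (a : ℕ → ℝ) (k : ℕ) : Set (Fin (k + 1) → ℝ) :=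
  {v | (∀ i : Fin (k + 1), 1 ≤ (i : ℕ) → (i : ℕ) < k → a i + v i < T + v 0) ∧
       T + v 0 ≤ a k + v (Fin.last k)}

section Aux

open scoped ENNReal

noncomputable def expPdf (b : ℝ) (z : ℝ) : ℝ≥0∞ :=
  ENNReal.ofReal (if 0 ≤ z then (1 / b) * Real.exp (-(z / b)) else 0)

lemma measurable_expPdf (b : ℝ) : Measurable (expPdf b) := by
  apply Measurable.ennreal_ofReal
  apply Measurable.ite (measurableSet_le measurable_const measurable_id)
  · exact (measurable_id.div_const b).neg.exp.const_mul _
  · exact measurable_const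

lemma expDist_def (b : ℝ) : expDist b = volume.withDensity (expPdf b) := rfl

instance expDist_sigmaFinite (b : ℝ) : SigmaFinite (expDist b) := by
  unfold expDist; infer_instance

lemma lintegral_pi_prod : ∀ (m : ℕ) (μ : Fin m → Measure ℝ), (∀ i, SigmaFinite (μ i)) →
    ∀ (h : Fin m → ℝ → ℝ≥0∞), (∀ i, Measurable (h i)) →
    ∫⁻ v, ∏ i, h i (v i) ∂Measure.pi μ = ∏ i, ∫⁻ z, h i z ∂(μ i) := by
  intro m
  induction m with
  | zero =>
    intro μ _ h _
    simp [Measure.pi_of_empty]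
  | succ m ih =>
    intro μ hσ h hh
    haveI := hσ
    have hmp := measurePreserving_piFinSuccAbove μ 0
    set e := MeasurableEquiv.piFinSuccAbove (fun _ : Fin (m+1) => ℝ) 0 with he
    have hF : Measurable (fun p : ℝ × (Fin m → ℝ) =>
        h 0 p.1 * ∏ j : Fin m, h (Fin.succ j) (p.2 j)) :=
      ((hh 0).comp measurable_fst).mul
        (Finset.measurable_prod _ fun j _ => (hh _).comp ((measurable_pi_apply j).comp measurable_snd))
    have step : ∫⁻ v, ∏ i, h i (v i) ∂Measure.pi μ
        = ∫⁻ p, h 0 p.1 * ∏ j : Fin m, h (Fin.succ j) (p.2 j)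
            ∂((μ 0).prod (Measure.pi fun j => μ ((0 : Fin (m+1)).succAbove j))) := by
      rw [← hmp.lintegral_comp hF]
      congr 1
      funext v
      simp only [he, MeasurableEquiv.piFinSuccAbove_apply]
      rw [Fin.prod_univ_succ]
      simp [Fin.removeNth, Fin.succAbove_zero, Fin.tail]
    rw [step, lintegral_prod_mul (f := h 0)
      (g := fun w : Fin m → ℝ => ∏ j : Fin m, h (Fin.succ j) (w j)) (hh 0).aemeasurable
      (Finset.measurable_prod _ fun j _ => (hh _).comp (measurable_pi_apply j)).aemeasurable]
    rw [ih _ (fun j => hσ _) (fun j => h (Fin.succ j)) (fun j => hh _), Fin.prod_univ_succ]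
    simp [Fin.succAbove_zero]

lemma pi_expDist_eq (m : ℕ) (b : Fin m → ℝ) :
    Measure.pi (fun i => expDist (b i)) =
      (Measure.pi fun _ : Fin m => (volume : Measure ℝ)).withDensity
        (fun v => ∏ i, expPdf (b i) (v i)) := by
  refine Measure.pi_eq fun s hs => ?_
  rw [withDensity_apply _ (MeasurableSet.univ_pi hs)]
  have : ∫⁻ v in Set.univ.pi s, ∏ i, expPdf (b i) (v i) ∂(Measure.pi fun _ : Fin m => (volume : Measure ℝ))
      = ∫⁻ v, ∏ i, (s i).indicator (expPdf (b i)) (v i) ∂(Measure.pi fun _ : Fin m => (volume : Measure ℝ)) := by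
    rw [← lintegral_indicator (MeasurableSet.univ_pi hs) _]
    congr 1
    funext v
    by_cases hv : v ∈ Set.univ.pi s
    · rw [Set.indicator_of_mem hv]
      exact Finset.prod_congr rfl fun i _ => (Set.indicator_of_mem (hv i (Set.mem_univ i)) _).symm
    · rw [Set.indicator_of_notMem hv]
      obtain ⟨i, hi⟩ : ∃ i, v i ∉ s i := by simpa [Set.mem_pi] using hv
      exact (Finset.prod_eq_zero (Finset.mem_univ i) (by rw [Set.indicator_of_notMem hi])).symm
  rw [this, lintegral_pi_prod m _ (fun _ => inferInstance) _
    (fun i => (measurable_expPdf (b i)).indicator (hs i))]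
  exact Finset.prod_congr rfl fun i _ => by
    rw [lintegral_indicator (hs i) _, expDist_def, withDensity_apply _ (hs i)]

lemma expPdf_shift {b s : ℝ} (hb : 0 < b) (hs : 0 ≤ s) (z : ℝ) :
    expPdf b z ≤ ENNReal.ofReal (Real.exp (s / b)) * expPdf b (z + s) := by
  unfold expPdf
  by_cases hz : 0 ≤ z
  · have hzs : 0 ≤ z + s := by linarith
    rw [if_pos hz, if_pos hzs, ← ENNReal.ofReal_mul (Real.exp_nonneg _)]
    apply ENNReal.ofReal_le_ofReal
    rw [show Real.exp (s / b) * (1 / b * Real.exp (-((z + s) / b)))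
        = 1 / b * (Real.exp (s / b) * Real.exp (-((z + s) / b))) by ring,
      ← Real.exp_add]
    have : s / b + -((z + s) / b) = -(z / b) := by field_simp; ring
    rw [this]
  · rw [if_neg hz]
    simp

lemma key_shift (m : ℕ) (b c : Fin m → ℝ) (hb : ∀ i, 0 < b i) (hc : ∀ i, 0 ≤ c i)
    (ε : ℝ) (hε : ∑ i, c i / b i ≤ ε) (E E' : Set (Fin m → ℝ)) (hE : MeasurableSet E)
    (hmap : ∀ v ∈ E, v + c ∈ E') :
    Measure.pi (fun i => expDist (b i)) E ≤
      ENNReal.ofReal (Real.exp ε) * Measure.pi (fun i => expDist (b i)) E' := by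
  classical
  set ν : Measure (Fin m → ℝ) := Measure.pi fun _ => (volume : Measure ℝ) with hν
  set D : (Fin m → ℝ) → ℝ≥0∞ := fun v => ∏ i, expPdf (b i) (v i) with hD
  have hDm : Measurable D :=
    Finset.measurable_prod _ fun i _ => (measurable_expPdf _).comp (measurable_pi_apply i)
  have hpw : ∀ v, D v ≤ ENNReal.ofReal (Real.exp ε) * D (v + c) := by
    intro v
    have h1 : D v ≤ ∏ i, (ENNReal.ofReal (Real.exp (c i / b i)) * expPdf (b i) (v i + c i)) :=
      Finset.prod_le_prod' fun i _ => expPdf_shift (hb i) (hc i) (v i)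
    have h2 : (∏ i, (ENNReal.ofReal (Real.exp (c i / b i)) * expPdf (b i) (v i + c i)))
        = (∏ i, ENNReal.ofReal (Real.exp (c i / b i))) * D (v + c) := by
      rw [Finset.prod_mul_distrib]; rfl
    have h3 : (∏ i, ENNReal.ofReal (Real.exp (c i / b i)))
        = ENNReal.ofReal (Real.exp (∑ i, c i / b i)) := by
      rw [← ENNReal.ofReal_prod_of_nonneg (fun i _ => Real.exp_nonneg _), Real.exp_sum]
    calc D v ≤ _ := h1
      _ = _ := h2
      _ ≤ ENNReal.ofReal (Real.exp ε) * D (v + c) := by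
          rw [h3]
          exact mul_le_mul_left (ENNReal.ofReal_le_ofReal (Real.exp_le_exp.2 hε)) _
  have hνinv : MeasureTheory.Measure.IsAddRightInvariant ν := by
    rw [hν]; infer_instance
  have htrans : ∫⁻ v in E, D (v + c) ∂ν = ν.withDensity D ((fun w => w - c) ⁻¹' E) := by
    rw [withDensity_apply _ (hE.preimage (measurable_id'.sub_const c))]
    rw [← lintegral_indicator hE _, ← lintegral_indicator (hE.preimage (measurable_id'.sub_const c)) _]
    rw [← lintegral_add_right_eq_self (μ := ν) (((fun w => w - c) ⁻¹' E).indicator D) c]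
    congr 1
    funext v
    by_cases hv : v ∈ E
    · rw [Set.indicator_of_mem hv, Set.indicator_of_mem (by simp [Set.mem_preimage, hv])]
    · rw [Set.indicator_of_notMem hv, Set.indicator_of_notMem (by simp [Set.mem_preimage, hv])]
  have hsub : (fun w => w - c) ⁻¹' E ⊆ E' := by
    intro w hw
    have := hmap _ hw
    simpa using this
  calc Measure.pi (fun i => expDist (b i)) E
      = ∫⁻ v in E, D v ∂ν := by rw [pi_expDist_eq, withDensity_apply _ hE]
    _ ≤ ∫⁻ v in E, ENNReal.ofReal (Real.exp ε) * D (v + c) ∂ν :=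
        setLIntegral_mono (measurable_const.mul (hDm.comp (measurable_id.add_const c))) fun v _ => hpw v
    _ = ENNReal.ofReal (Real.exp ε) * ∫⁻ v in E, D (v + c) ∂ν :=
        lintegral_const_mul _ (hDm.comp (measurable_id.add_const c))
    _ = ENNReal.ofReal (Real.exp ε) * ν.withDensity D ((fun w => w - c) ⁻¹' E) := by rw [htrans]
    _ ≤ ENNReal.ofReal (Real.exp ε) * Measure.pi (fun i => expDist (b i)) E' := by
        rw [pi_expDist_eq]
        exact mul_le_mul_right (measure_mono hsub) _

lemma measurableSet_haltEvent (T : ℝ) (a : ℕ → ℝ) (k : ℕ) :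
    MeasurableSet (haltEvent T a k) := by
  apply MeasurableSet.inter
  · show MeasurableSet {v : Fin (k + 1) → ℝ | ∀ i : Fin (k + 1), 1 ≤ (i : ℕ) → (i : ℕ) < k →
        a i + v i < T + v 0}
    have : {v : Fin (k + 1) → ℝ | ∀ i : Fin (k + 1), 1 ≤ (i : ℕ) → (i : ℕ) < k →
        a i + v i < T + v 0} =
        ⋂ i : Fin (k + 1), {v | 1 ≤ (i : ℕ) → (i : ℕ) < k → a i + v i < T + v 0} := by
      ext v; simp
    rw [this]
    refine MeasurableSet.iInter fun i => ?_
    by_cases h1 : 1 ≤ (i : ℕ)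
    · by_cases h2 : (i : ℕ) < k
      · have : {v : Fin (k + 1) → ℝ | 1 ≤ (i : ℕ) → (i : ℕ) < k → a i + v i < T + v 0}
            = {v | a i + v i < T + v 0} := by ext v; simp [h1, h2]
        rw [this]
        exact measurableSet_lt (measurable_const.add (measurable_pi_apply i))
          (measurable_const.add (measurable_pi_apply 0))
      · have : {v : Fin (k + 1) → ℝ | 1 ≤ (i : ℕ) → (i : ℕ) < k → a i + v i < T + v 0}
            = Set.univ := by ext v; simp [h2]
        rw [this]; exact MeasurableSet.univ
    · have : {v : Fin (k + 1) → ℝ | 1 ≤ (i : ℕ) → (i : ℕ) < k → a i + v i < T + v 0}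
          = Set.univ := by ext v; simp [h1]
      rw [this]; exact MeasurableSet.univ
  · show MeasurableSet {v : Fin (k + 1) → ℝ | T + v 0 ≤ a k + v (Fin.last k)}
    exact measurableSet_le (measurable_const.add (measurable_pi_apply 0))
      (measurable_const.add (measurable_pi_apply (Fin.last k)))

lemma halt_shift_mem {T : ℝ} {a a' : ℕ → ℝ} {k : ℕ} (hk : 1 ≤ k) (s₀ : ℝ)
    (hup : ∀ m : ℕ, a' m ≤ a m + s₀) (hdown : a k ≤ a' k + 1 - s₀)
    {v : Fin (k + 1) → ℝ} (hv : v ∈ haltEvent T a k) :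
    v + (fun i => (if i = 0 then s₀ else 0) + (if i = Fin.last k then 1 else 0))
      ∈ haltEvent T a' k := by
  obtain ⟨hlt, hge⟩ := hv
  have hlast0 : Fin.last k ≠ 0 := by
    simp [Fin.ext_iff]; omega
  constructor
  · intro i hi1 hi2
    have hi0 : i ≠ 0 := by
      intro h; rw [h] at hi1; simp at hi1
    have hil : i ≠ Fin.last k := by
      intro h; rw [h] at hi2; simp at hi2
    have h0 : (v + fun i => (if i = 0 then s₀ else 0) + (if i = Fin.last k then 1 else 0)) 0
        = v 0 + s₀ := by simp [hlast0.symm]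
    have hvi : (v + fun i => (if i = 0 then s₀ else 0) + (if i = Fin.last k then 1 else 0)) i
        = v i := by simp [hi0, hil]
    rw [h0, hvi]
    have := hlt i hi1 hi2
    have := hup i
    linarith
  · have h0 : (v + fun i => (if i = 0 then s₀ else 0) + (if i = Fin.last k then 1 else 0)) 0
        = v 0 + s₀ := by simp [hlast0.symm]
    have hvl : (v + fun i => (if i = 0 then s₀ else 0) + (if i = Fin.last k then 1 else 0))
        (Fin.last k) = v (Fin.last k) + 1 := by simp [hlast0]
    rw [h0, hvl]
    linarith

lemma card_filter_mono {n : ℕ} (x x' : Fin n → ℝ) (j₀ : Fin n)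
    (hj : ∀ j : Fin n, j ≠ j₀ → x j = x' j) (hle : x' j₀ ≤ x j₀) (ℓ t : ℝ) :
    (Finset.univ.filter fun j : Fin n => x j - ℓ + 1 < t).card
      ≤ (Finset.univ.filter fun j : Fin n => x' j - ℓ + 1 < t).card ∧
    (Finset.univ.filter fun j : Fin n => x' j - ℓ + 1 < t).card
      ≤ (Finset.univ.filter fun j : Fin n => x j - ℓ + 1 < t).card + 1 := by
  classical
  constructor
  · apply Finset.card_le_card
    intro j hjmem
    simp only [Finset.mem_filter, Finset.mem_univ, true_and] at hjmem ⊢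
    by_cases h : j = j₀
    · subst h; linarith
    · rw [← hj j h]; exact hjmem
  · calc (Finset.univ.filter fun j : Fin n => x' j - ℓ + 1 < t).card
        ≤ (insert j₀ (Finset.univ.filter fun j : Fin n => x j - ℓ + 1 < t)).card := by
          apply Finset.card_le_card
          intro j hjmem
          simp only [Finset.mem_filter, Finset.mem_univ, true_and] at hjmem
          by_cases h : j = j₀
          · exact Finset.mem_insert.2 (Or.inl h)
          · refine Finset.mem_insert.2 (Or.inr ?_)
            simp only [Finset.mem_filter, Finset.mem_univ, true_and]
            rw [hj j h]; exact hjmem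
      _ ≤ _ := Finset.card_insert_le _ _

end Aux

/-- The unbounded quantile mechanism (AboveThreshold with threshold `qn`, counting queries
`f_i(y) = |{j : y_j − ℓ + 1 < β^i}|` and exponential noise) is `(ε₁+ε₂)`-DP under the swap
definition of neighbors. -/
theorem unbounded_quantile_swap_dp (n : ℕ) (hn : 1 ≤ n) (β ℓ q ε₁ ε₂ : ℝ) (hβ : 1 < β)
    (hq0 : 0 ≤ q) (hq1 : q ≤ 1) (hε₁ : 0 < ε₁) (hε₂ : 0 < ε₂)
    (x x' : Fin n → ℝ)
    (hneighbor : ∃ j₀ : Fin n, ∀ j : Fin n, j ≠ j₀ → x j = x' j)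
    (k : ℕ) (hk : 1 ≤ k) :
    Measure.pi (fun i : Fin (k + 1) => if i = 0 then expDist (1 / ε₁) else expDist (1 / ε₂))
        (haltEvent (q * n)
          (fun i => ((Finset.univ.filter fun j : Fin n => x j - ℓ + 1 < β ^ i).card : ℝ)) k) ≤
      ENNReal.ofReal (Real.exp (ε₁ + ε₂)) *
        Measure.pi
          (fun i : Fin (k + 1) => if i = 0 then expDist (1 / ε₁) else expDist (1 / ε₂))
          (haltEvent (q * n)
            (fun i => ((Finset.univ.filter fun j : Fin n => x' j - ℓ + 1 < β ^ i).card : ℝ))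
            k) := by
  classical
  obtain ⟨j₀, hj⟩ := hneighbor
  set a : ℕ → ℝ := fun i => ((Finset.univ.filter fun j : Fin n => x j - ℓ + 1 < β ^ i).card : ℝ)
    with ha
  set a' : ℕ → ℝ := fun i => ((Finset.univ.filter fun j : Fin n => x' j - ℓ + 1 < β ^ i).card : ℝ)
    with ha'
  set b : Fin (k + 1) → ℝ := fun i => if i = 0 then 1 / ε₁ else 1 / ε₂ with hbdef
  have hmeas : (fun i : Fin (k + 1) => if i = 0 then expDist (1 / ε₁) else expDist (1 / ε₂))
      = fun i => expDist (b i) := by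
    funext i
    rw [hbdef]
    exact (apply_ite expDist _ _ _).symm
  have hb : ∀ i, 0 < b i := by
    intro i; rw [hbdef]
    dsimp only
    split <;> positivity
  have hk0 : k ≠ 0 := by omega
  have hlast0 : Fin.last k ≠ (0 : Fin (k + 1)) := by
    simp [Fin.ext_iff]; omega
  rw [hmeas]
  -- choose s₀ according to the direction of the change
  rcases le_total (x' j₀) (x j₀) with hle | hle
  · -- x' j₀ ≤ x j₀ : a m ≤ a' m ≤ a m + 1, use s₀ = 1
    have hbnd : ∀ m : ℕ, a m ≤ a' m ∧ a' m ≤ a m + 1 := by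
      intro m
      obtain ⟨h1, h2⟩ := card_filter_mono x x' j₀ hj hle ℓ (β ^ m)
      constructor
      · simp only [ha, ha']; exact_mod_cast h1
      · simp only [ha, ha']; exact_mod_cast h2
    refine key_shift (k + 1) b
      (fun i => (if i = 0 then (1 : ℝ) else 0) + (if i = Fin.last k then 1 else 0))
      hb (fun i => by positivity) (ε₁ + ε₂) ?_ _ _ (measurableSet_haltEvent _ _ _) ?_
    · have hsummand : ∀ i : Fin (k + 1),
          ((if i = 0 then (1 : ℝ) else 0) + (if i = Fin.last k then 1 else 0)) / b i
          = (if i = 0 then ε₁ else 0) + (if i = Fin.last k then ε₂ else 0) := by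
        intro i
        rw [hbdef]
        by_cases h0 : i = 0
        · have hl : i ≠ Fin.last k := by rw [h0]; exact fun h => hlast0 h.symm
          simp [h0, hl, hk0]
        · by_cases hl : i = Fin.last k
          · simp [h0, hl, hk0, one_div_one_div, inv_inv]
          · simp [h0, hl]
      rw [Finset.sum_congr rfl fun i _ => hsummand i, Finset.sum_add_distrib,
        Finset.sum_ite_eq' Finset.univ (0 : Fin (k + 1)),
        Finset.sum_ite_eq' Finset.univ (Fin.last k)]
      simp
    · intro v hv
      exact halt_shift_mem hk 1 (fun m => by linarith [(hbnd m).2]) (by linarith [(hbnd k).1]) hv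
  · -- x j₀ ≤ x' j₀ : a' m ≤ a m ≤ a' m + 1, use s₀ = 0
    have hbnd : ∀ m : ℕ, a' m ≤ a m ∧ a m ≤ a' m + 1 := by
      intro m
      obtain ⟨h1, h2⟩ := card_filter_mono x' x j₀ (fun j hjj => (hj j hjj).symm) hle ℓ (β ^ m)
      constructor
      · simp only [ha, ha']; exact_mod_cast h1
      · simp only [ha, ha']; exact_mod_cast h2
    refine key_shift (k + 1) b
      (fun i => (if i = 0 then (0 : ℝ) else 0) + (if i = Fin.last k then 1 else 0))
      hb (fun i => by positivity) (ε₁ + ε₂) ?_ _ _ (measurableSet_haltEvent _ _ _) ?_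
    · have hsummand : ∀ i : Fin (k + 1),
          ((if i = 0 then (0 : ℝ) else 0) + (if i = Fin.last k then 1 else 0)) / b i
          = (if i = Fin.last k then ε₂ else 0) := by
        intro i
        rw [hbdef]
        by_cases h0 : i = 0
        · have hl : i ≠ Fin.last k := by rw [h0]; exact fun h => hlast0 h.symm
          simp [h0, hl, hk0]
        · by_cases hl : i = Fin.last k
          · simp [h0, hl, hk0, one_div_one_div, inv_inv]
          · simp [h0, hl]
      rw [Finset.sum_congr rfl fun i _ => hsummand i,
        Finset.sum_ite_eq' Finset.univ (Fin.last k)]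
      simp
      linarith
    · intro v hv
      exact halt_shift_mem hk 0 (fun m => by linarith [(hbnd m).1]) (by linarith [(hbnd k).2]) hv
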